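/- arXiv:1703.00038 — 2 statements merged into one kernel-verified Lean document; each statement's English description precedes it below -/
import Mathlib

section
/- Let Q(x,y)=ax²+hxy+by² be a definite integer binary quadratic form (i.e. a,h,b ∈ ℤ with discriminant D=h²−4ab<0). Then for every sequence w:ℕ→{L,R}, the Lyapunov exponent of the values of Q along the path w is twice the matrix Lyapunov exponent: Λ_Q(w) = 2·Λ(w). -/
open Filter Matrix

noncomputable section

def Lm : Matrix (Fin 2) (Fin 2) ℤ := !![1, 1; 0, 1]

def Rm : Matrix (Fin 2) (Fin 2) ℤ := !![1, 0; 1, 1]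

/-- `pathMat w n = w 0 * w 1 * ⋯ * w (n-1)`. -/
def pathMat (w : ℕ → Matrix (Fin 2) (Fin 2) ℤ) (n : ℕ) : Matrix (Fin 2) (Fin 2) ℤ :=
  ((List.range n).map w).prod

/-- The value of the form `a x² + h x y + b y²`. -/
def Qval (a h b x y : ℤ) : ℤ := a * x ^ 2 + h * x * y + b * y ^ 2

/-- `|Qₙ(w)| = max(|aₙ|, |bₙ|, |cₙ|)` where the values are taken at the n-th superbase. -/
def Qnorm (a h b : ℤ) (w : ℕ → Matrix (Fin 2) (Fin 2) ℤ) (n : ℕ) : ℤ :=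
  max |Qval a h b (pathMat w n 0 0) (pathMat w n 1 0)|
    (max |Qval a h b (pathMat w n 0 1) (pathMat w n 1 1)|
      |Qval a h b (pathMat w n 0 0 + pathMat w n 0 1) (pathMat w n 1 0 + pathMat w n 1 1)|)

/-- The Lyapunov exponent `Λ_Q(w)` of the values of `Q` along the path `w`. -/
def LyapQ (a h b : ℤ) (w : ℕ → Matrix (Fin 2) (Fin 2) ℤ) : ℝ :=
  limsup (fun n : ℕ => Real.log (Qnorm a h b w n : ℝ) / (n : ℝ)) atTop

/-- The matrix Lyapunov exponent `Λ(w)`, via the spectral radius over ℂ. -/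
def Lyap (w : ℕ → Matrix (Fin 2) (Fin 2) ℤ) : ℝ :=
  limsup (fun n : ℕ =>
    Real.log ((spectralRadius ℂ ((pathMat w n).map ((↑) : ℤ → ℂ))).toReal) / (n : ℝ)) atTop

/-!
Along an `L`/`R` path, `Aₙ` has nonnegative entries and determinant one, so its trace `tₙ` is at
least `2` and `tₙ / 2 ≤ ρ(Aₙ) ≤ tₙ`. Each step adds at most `tₙ₊₁` to the entry sum `Sₙ`, and the
traces are nondecreasing, so `tₙ ≤ Sₙ ≤ (n + 1) tₙ`. For a definite form, `|Q(x, y)|` is comparable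
to `x² + y²`, so `|Qₙ(w)|` is comparable to `Sₙ²`. Hence `|Qₙ(w)|` and `ρ(Aₙ)²` agree up to a factor
polynomial in `n`, which does not change the exponential growth rate.
-/

open Topology

def entrySum (A : Matrix (Fin 2) (Fin 2) ℤ) : ℤ := A 0 0 + A 0 1 + A 1 0 + A 1 1

def complexSpectralRadius (A : Matrix (Fin 2) (Fin 2) ℤ) : ℝ :=
  (spectralRadius ℂ (A.map ((↑) : ℤ → ℂ))).toReal

lemma pathMat_succ (w : ℕ → Matrix (Fin 2) (Fin 2) ℤ) (n : ℕ) :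
    pathMat w (n + 1) = pathMat w n * w n := by
  simp [pathMat, List.range_succ]

section Generators

variable {A G : Matrix (Fin 2) (Fin 2) ℤ}

lemma det_generator_eq_one (hG : G = Lm ∨ G = Rm) : G.det = 1 := by
  rcases hG with rfl | rfl <;> simp [Lm, Rm, det_fin_two]

lemma mul_generator_nonneg (hA : ∀ i j, 0 ≤ A i j) (hG : G = Lm ∨ G = Rm) (i j : Fin 2) :
    0 ≤ (A * G) i j := by
  rcases hG with rfl | rfl <;> fin_cases i <;> fin_cases j <;>
    simp [Lm, Rm, mul_apply, Fin.sum_univ_two] <;> linarith [hA 0 0, hA 0 1, hA 1 0, hA 1 1]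

lemma trace_le_trace_mul_generator (hA : ∀ i j, 0 ≤ A i j) (hG : G = Lm ∨ G = Rm) :
    A.trace ≤ (A * G).trace := by
  rcases hG with rfl | rfl <;> simp [Lm, Rm, trace_fin_two, mul_apply, Fin.sum_univ_two] <;>
    linarith [hA 0 1, hA 1 0]

lemma entrySum_mul_generator_le_add_trace (hA : ∀ i j, 0 ≤ A i j) (hG : G = Lm ∨ G = Rm) :
    entrySum (A * G) ≤ entrySum A + (A * G).trace := by
  rcases hG with rfl | rfl <;>
    simp [entrySum, Lm, Rm, trace_fin_two, mul_apply, Fin.sum_univ_two] <;>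
    linarith [hA 0 0, hA 0 1, hA 1 0, hA 1 1]

lemma entrySum_mul_generator_le_two_mul (hA : ∀ i j, 0 ≤ A i j) (hG : G = Lm ∨ G = Rm) :
    entrySum (A * G) ≤ 2 * entrySum A := by
  rcases hG with rfl | rfl <;> simp [entrySum, Lm, Rm, mul_apply, Fin.sum_univ_two] <;>
    linarith [hA 0 0, hA 0 1, hA 1 0, hA 1 1]

end Generators

section NonnegDetOne

variable {A : Matrix (Fin 2) (Fin 2) ℤ}

lemma one_le_diag_of_nonneg_of_det_eq_one (hA : ∀ i j, 0 ≤ A i j) (hdet : A.det = 1) :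
    1 ≤ A 0 0 ∧ 1 ≤ A 1 1 := by
  rw [det_fin_two] at hdet
  have := hA 0 0; have := hA 0 1; have := hA 1 0; have := hA 1 1
  constructor <;> nlinarith

lemma two_le_trace_of_nonneg_of_det_eq_one (hA : ∀ i j, 0 ≤ A i j) (hdet : A.det = 1) :
    2 ≤ A.trace := by
  have := one_le_diag_of_nonneg_of_det_eq_one hA hdet
  rw [trace_fin_two]; omega

lemma trace_le_entrySum (hA : ∀ i j, 0 ≤ A i j) : A.trace ≤ entrySum A := by
  rw [trace_fin_two, entrySum]; linarith [hA 0 1, hA 1 0]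

end NonnegDetOne

section Path

variable {w : ℕ → Matrix (Fin 2) (Fin 2) ℤ}

lemma det_pathMat (hw : ∀ n, w n = Lm ∨ w n = Rm) (n : ℕ) : (pathMat w n).det = 1 := by
  induction n with
  | zero => simp [pathMat]
  | succ n ih => rw [pathMat_succ, det_mul, ih, det_generator_eq_one (hw n), one_mul]

lemma pathMat_nonneg (hw : ∀ n, w n = Lm ∨ w n = Rm) (n : ℕ) : ∀ i j, 0 ≤ pathMat w n i j := by
  induction n with
  | zero => intro i j; fin_cases i <;> fin_cases j <;> simp [pathMat]
  | succ n ih => rw [pathMat_succ]; exact mul_generator_nonneg ih (hw n)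

lemma two_le_trace_pathMat (hw : ∀ n, w n = Lm ∨ w n = Rm) (n : ℕ) : 2 ≤ (pathMat w n).trace :=
  two_le_trace_of_nonneg_of_det_eq_one (pathMat_nonneg hw n) (det_pathMat hw n)

lemma trace_pathMat_mono (hw : ∀ n, w n = Lm ∨ w n = Rm) :
    Monotone fun n => (pathMat w n).trace :=
  monotone_nat_of_le_succ fun n => by
    simpa only [pathMat_succ] using trace_le_trace_mul_generator (pathMat_nonneg hw n) (hw n)

lemma two_le_entrySum_pathMat (hw : ∀ n, w n = Lm ∨ w n = Rm) (n : ℕ) :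
    2 ≤ entrySum (pathMat w n) :=
  (two_le_trace_pathMat hw n).trans (trace_le_entrySum (pathMat_nonneg hw n))

lemma entrySum_pathMat_le_mul_trace (hw : ∀ n, w n = Lm ∨ w n = Rm) (n : ℕ) :
    entrySum (pathMat w n) ≤ (n + 1) * (pathMat w n).trace := by
  induction n with
  | zero => simp [entrySum, pathMat]
  | succ n ih =>
    have hstep := entrySum_mul_generator_le_add_trace (pathMat_nonneg hw n) (hw n)
    have hmono : (pathMat w n).trace ≤ (pathMat w (n + 1)).trace :=
      trace_pathMat_mono hw n.le_succ
    rw [← pathMat_succ] at hstep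
    push_cast
    nlinarith [two_le_trace_pathMat hw n]

lemma entrySum_pathMat_le_two_pow (hw : ∀ n, w n = Lm ∨ w n = Rm) (n : ℕ) :
    entrySum (pathMat w n) ≤ 2 ^ (n + 1) := by
  induction n with
  | zero => simp [entrySum, pathMat]
  | succ n ih =>
    rw [pathMat_succ, pow_succ]
    linarith [entrySum_mul_generator_le_two_mul (pathMat_nonneg hw n) (hw n)]

end Path

lemma spectrum_eq_of_trace_of_det_eq_one {M : Matrix (Fin 2) (Fin 2) ℂ} {t : ℝ} (ht : 2 ≤ t)
    (htr : M.trace = t) (hdet : M.det = 1) :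
    spectrum ℂ M = {(((t + √(t ^ 2 - 4)) / 2 : ℝ) : ℂ), (((t - √(t ^ 2 - 4)) / 2 : ℝ) : ℂ)} := by
  have hsq : (√(t ^ 2 - 4) : ℂ) ^ 2 = t ^ 2 - 4 := by
    rw [← Complex.ofReal_pow, Real.sq_sqrt (by nlinarith)]; push_cast; rfl
  ext z
  rw [mem_spectrum_iff_isRoot_charpoly, charpoly_fin_two, htr, hdet]
  have hfactor : z ^ 2 - t * z + 1 = (z - (((t + √(t ^ 2 - 4)) / 2 : ℝ) : ℂ)) *
      (z - (((t - √(t ^ 2 - 4)) / 2 : ℝ) : ℂ)) := by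
    push_cast
    linear_combination (1 / 4 : ℂ) * hsq
  simp [hfactor, sub_eq_zero]

lemma spectralRadius_toReal_of_trace_of_det_eq_one {M : Matrix (Fin 2) (Fin 2) ℂ} {t : ℝ}
    (ht : 2 ≤ t) (htr : M.trace = t) (hdet : M.det = 1) :
    (spectralRadius ℂ M).toReal = (t + √(t ^ 2 - 4)) / 2 := by
  have hsqrt : √(t ^ 2 - 4) ≤ t := (Real.sqrt_le_left (by linarith)).mpr (by linarith)
  have hsmall : 0 ≤ (t - √(t ^ 2 - 4)) / 2 := by linarith
  have hlarge : 0 ≤ (t + √(t ^ 2 - 4)) / 2 := by linarith [Real.sqrt_nonneg (t ^ 2 - 4)]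
  have hle :
      ‖(((t - √(t ^ 2 - 4)) / 2 : ℝ) : ℂ)‖₊ ≤ ‖(((t + √(t ^ 2 - 4)) / 2 : ℝ) : ℂ)‖₊ := by
    rw [← NNReal.coe_le_coe, coe_nnnorm, coe_nnnorm, Complex.norm_real, Complex.norm_real,
      Real.norm_of_nonneg hsmall, Real.norm_of_nonneg hlarge]
    linarith [Real.sqrt_nonneg (t ^ 2 - 4)]
  rw [spectralRadius, spectrum_eq_of_trace_of_det_eq_one ht htr hdet, iSup_pair,
    sup_eq_left.mpr (by exact_mod_cast hle), ENNReal.coe_toReal, coe_nnnorm, Complex.norm_real,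
    Real.norm_of_nonneg hlarge]

lemma complexSpectralRadius_mem_Icc {A : Matrix (Fin 2) (Fin 2) ℤ} (hdet : A.det = 1)
    (ht : 2 ≤ A.trace) : complexSpectralRadius A ∈ Set.Icc ((A.trace : ℝ) / 2) A.trace := by
  have htR : (2 : ℝ) ≤ A.trace := by exact_mod_cast ht
  rw [complexSpectralRadius, spectralRadius_toReal_of_trace_of_det_eq_one htR
    (by simp [trace_fin_two]) (by simpa [hdet] using ((Int.castRingHom ℂ).map_det A).symm)]
  have hsqrt : √((A.trace : ℝ) ^ 2 - 4) ≤ A.trace :=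
    (Real.sqrt_le_left (by linarith)).mpr (by linarith)
  constructor <;> linarith [Real.sqrt_nonneg ((A.trace : ℝ) ^ 2 - 4)]

lemma abs_Qval_le (a h b : ℤ) {x y m : ℤ} (hx : |x| ≤ m) (hy : |y| ≤ m) :
    |Qval a h b x y| ≤ (|a| + |h| + |b|) * m ^ 2 := by
  have hx2 : |x| ^ 2 ≤ m ^ 2 := pow_le_pow_left₀ (abs_nonneg x) hx 2
  have hy2 : |y| ^ 2 ≤ m ^ 2 := pow_le_pow_left₀ (abs_nonneg y) hy 2
  have hxy : |x| * |y| ≤ m ^ 2 := by nlinarith [abs_nonneg x, abs_nonneg y]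
  calc |Qval a h b x y| ≤ |a| * |x| ^ 2 + |h| * (|x| * |y|) + |b| * |y| ^ 2 := by
        unfold Qval
        refine (abs_add_three _ _ _).trans_eq ?_
        simp only [abs_mul, abs_pow]; ring
    _ ≤ (|a| + |h| + |b|) * m ^ 2 := by
        nlinarith [abs_nonneg a, abs_nonneg h, abs_nonneg b]

lemma neg_disc_mul_sq_add_sq_le (a h b x y : ℤ) :
    (4 * a * b - h ^ 2) * (x ^ 2 + y ^ 2) ≤ 4 * (|a| + |b|) * |Qval a h b x y| := by
  -- completing the square in `y`, resp. in `x`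
  have hb : 4 * b * Qval a h b x y = (h * x + 2 * b * y) ^ 2 + (4 * a * b - h ^ 2) * x ^ 2 := by
    unfold Qval; ring
  have ha : 4 * a * Qval a h b x y = (2 * a * x + h * y) ^ 2 + (4 * a * b - h ^ 2) * y ^ 2 := by
    unfold Qval; ring
  have hb' : 4 * b * Qval a h b x y ≤ 4 * |b| * |Qval a h b x y| := by
    rw [mul_assoc, mul_assoc, ← abs_mul]; linarith [le_abs_self (b * Qval a h b x y)]
  have ha' : 4 * a * Qval a h b x y ≤ 4 * |a| * |Qval a h b x y| := by
    rw [mul_assoc, mul_assoc, ← abs_mul]; linarith [le_abs_self (a * Qval a h b x y)]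
  nlinarith [sq_nonneg (h * x + 2 * b * y), sq_nonneg (2 * a * x + h * y)]

section Qnorm

variable (a h b : ℤ) {w : ℕ → Matrix (Fin 2) (Fin 2) ℤ} {n : ℕ}

lemma Qnorm_le_mul_entrySum_sq (hA : ∀ i j, 0 ≤ pathMat w n i j) :
    Qnorm a h b w n ≤ (|a| + |h| + |b|) * entrySum (pathMat w n) ^ 2 := by
  unfold Qnorm
  set A := pathMat w n
  have hS_def : entrySum A = A 0 0 + A 0 1 + A 1 0 + A 1 1 := rfl
  have hbound : ∀ x y, 0 ≤ x → 0 ≤ y → x ≤ entrySum A → y ≤ entrySum A →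
      |Qval a h b x y| ≤ (|a| + |h| + |b|) * entrySum A ^ 2 := fun x y hx hy hxS hyS =>
    abs_Qval_le a h b ((abs_of_nonneg hx).trans_le hxS) ((abs_of_nonneg hy).trans_le hyS)
  have := hA 0 0; have := hA 0 1; have := hA 1 0; have := hA 1 1
  refine max_le (hbound _ _ ?_ ?_ ?_ ?_) (max_le (hbound _ _ ?_ ?_ ?_ ?_) (hbound _ _ ?_ ?_ ?_ ?_))
    <;> linarith

lemma neg_disc_mul_entrySum_sq_le_Qnorm :
    (4 * a * b - h ^ 2) * entrySum (pathMat w n) ^ 2 ≤ 32 * (|a| + |b|) * Qnorm a h b w n := by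
  set A := pathMat w n
  have hsum : entrySum A ^ 2 ≤ 4 * ((A 0 0 ^ 2 + A 1 0 ^ 2) + (A 0 1 ^ 2 + A 1 1 ^ 2)) := by
    unfold entrySum
    nlinarith [sq_nonneg (A 0 0 - A 0 1), sq_nonneg (A 0 0 - A 1 0), sq_nonneg (A 0 0 - A 1 1),
      sq_nonneg (A 0 1 - A 1 0), sq_nonneg (A 0 1 - A 1 1), sq_nonneg (A 1 0 - A 1 1)]
  have hfirst := neg_disc_mul_sq_add_sq_le a h b (A 0 0) (A 1 0)
  have hsecond := neg_disc_mul_sq_add_sq_le a h b (A 0 1) (A 1 1)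
  have hQ₁ : |Qval a h b (A 0 0) (A 1 0)| ≤ Qnorm a h b w n := le_max_left _ _
  have hQ₂ : |Qval a h b (A 0 1) (A 1 1)| ≤ Qnorm a h b w n :=
    (le_max_left _ _).trans (le_max_right _ _)
  have hab : 0 ≤ |a| + |b| := by positivity
  rcases le_or_gt 0 (4 * a * b - h ^ 2) with hD | hD
  · nlinarith [abs_nonneg (Qval a h b (A 0 0) (A 1 0)), abs_nonneg (Qval a h b (A 0 1) (A 1 1))]
  · nlinarith [sq_nonneg (entrySum A), abs_nonneg (Qval a h b (A 0 0) (A 1 0))]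

end Qnorm

lemma limsup_add_of_tendsto_zero {ι : Type*} {f : Filter ι} [f.NeBot] {u v : ι → ℝ}
    (hu : IsBoundedUnder (· ≤ ·) f u) (hu' : IsBoundedUnder (· ≥ ·) f u)
    (hv : Tendsto v f (𝓝 0)) :
    limsup (u + v) f = limsup u f := by
  refine le_antisymm ?_ ?_
  · simpa [hv.limsup_eq] using
      limsup_add_le hu' hu hv.isBoundedUnder_ge.isCoboundedUnder_le hv.isBoundedUnder_le
  · simpa [hv.liminf_eq] using
      le_limsup_add hu hu'.isCoboundedUnder_le hv.isBoundedUnder_le hv.isBoundedUnder_ge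

lemma limsup_const_mul_of_nonneg {ι : Type*} {f : Filter ι} [f.NeBot] {u : ι → ℝ} {c : ℝ}
    (hc : 0 ≤ c) (hu : IsBoundedUnder (· ≤ ·) f u) (hu' : IsCoboundedUnder (· ≤ ·) f u) :
    limsup (fun i => c * u i) f = c * limsup u f :=
  ((monotone_mul_left_of_nonneg hc).map_limsup_of_continuousAt u
    (continuous_const_mul c).continuousAt hu hu').symm

lemma tendsto_log_add_one_div_atTop :
    Tendsto (fun n : ℕ => Real.log (n + 1) / n) atTop (𝓝 0) := by
  have h := (Real.tendsto_pow_log_div_mul_add_atTop 1 (-1) 1 one_ne_zero).comp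
    (tendsto_atTop_add_const_right atTop 1 tendsto_natCast_atTop_atTop)
  refine h.congr fun n => ?_
  simp

lemma abs_log_sub_log_le {x y K : ℝ} (hx : 0 < x) (hy : 0 < y) (hxy : x ≤ K * y)
    (hyx : y ≤ K * x) : |Real.log x - Real.log y| ≤ Real.log K := by
  have hK : 0 < K := pos_of_mul_pos_left (hx.trans_le hxy) hy.le
  have h₁ := Real.log_le_log hx hxy
  have h₂ := Real.log_le_log hy hyx
  rw [Real.log_mul hK.ne' hy.ne'] at h₁
  rw [Real.log_mul hK.ne' hx.ne'] at h₂
  exact abs_sub_le_iff.mpr ⟨by linarith, by linarith⟩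

lemma isBoundedUnder_log_div {v : ℕ → ℝ} {c : ℝ} (hv : ∀ n, 1 ≤ v n)
    (hvc : ∀ n, v n ≤ c ^ (n + 1)) :
    IsBoundedUnder (· ≤ ·) atTop (fun n => Real.log (v n) / n) := by
  have hc : 0 ≤ Real.log c := Real.log_nonneg (by simpa using (hv 0).trans (hvc 0))
  refine isBoundedUnder_of_eventually_le (a := 2 * Real.log c) ?_
  filter_upwards [eventually_ge_atTop 1] with n hn
  have hn' : (1 : ℝ) ≤ n := by exact_mod_cast hn
  have hlog : Real.log (v n) ≤ (n + 1) * Real.log c := by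
    simpa [Real.log_pow] using Real.log_le_log (by linarith [hv n]) (hvc n)
  rw [div_le_iff₀ (by linarith)]
  nlinarith

lemma limsup_log_div_eq_of_le_mul_pow {u v : ℕ → ℝ} {c C : ℝ} {k : ℕ}
    (hu : ∀ n, 0 < u n) (hv : ∀ n, 1 ≤ v n) (hvc : ∀ n, v n ≤ c ^ (n + 1))
    (huv : ∀ n, u n ≤ C * (n + 1) ^ k * v n) (hvu : ∀ n, v n ≤ C * (n + 1) ^ k * u n) :
    limsup (fun n => Real.log (u n) / n) atTop = limsup (fun n => Real.log (v n) / n) atTop := by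
  have hC : 0 < C := by
    have := (hv 0).trans (hvu 0)
    simp only [CharP.cast_eq_zero, zero_add, one_pow, mul_one] at this
    exact pos_of_mul_pos_left (one_pos.trans_le this) (hu 0).le
  have hdiff : Tendsto (fun n => (Real.log (u n) - Real.log (v n)) / n) atTop (𝓝 0) := by
    have hbound := ((tendsto_const_div_atTop_nhds_zero_nat (Real.log C)).add
      (tendsto_log_add_one_div_atTop.const_mul (k : ℝ)))
    rw [zero_add, mul_zero] at hbound
    refine squeeze_zero_norm (fun n => ?_) hbound
    rw [Real.norm_eq_abs, abs_div, Nat.abs_cast, mul_div_assoc', ← add_div]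
    gcongr
    calc |Real.log (u n) - Real.log (v n)| ≤ Real.log (C * (n + 1) ^ k) :=
          abs_log_sub_log_le (hu n) (one_pos.trans_le (hv n)) (huv n) (hvu n)
      _ = Real.log C + k * Real.log (n + 1) := by
          rw [Real.log_mul hC.ne' (by positivity), Real.log_pow]
  have hsplit : (fun n : ℕ => Real.log (u n) / n) =
      (fun n => Real.log (v n) / n) + fun n => (Real.log (u n) - Real.log (v n)) / n := by
    ext n; simp only [Pi.add_apply]; ring
  rw [hsplit, limsup_add_of_tendsto_zero (isBoundedUnder_log_div hv hvc) ?_ hdiff]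
  exact isBoundedUnder_of ⟨0, fun n => div_nonneg (Real.log_nonneg (hv n)) n.cast_nonneg⟩

section Comparison

variable {a h b : ℤ} {w : ℕ → Matrix (Fin 2) (Fin 2) ℤ}

lemma complexSpectralRadius_pathMat_mem_Icc (hw : ∀ n, w n = Lm ∨ w n = Rm) (n : ℕ) :
    complexSpectralRadius (pathMat w n) ∈
      Set.Icc (((pathMat w n).trace : ℝ) / 2) (pathMat w n).trace :=
  complexSpectralRadius_mem_Icc (det_pathMat hw n) (two_le_trace_pathMat hw n)

lemma one_le_complexSpectralRadius_pathMat (hw : ∀ n, w n = Lm ∨ w n = Rm) (n : ℕ) :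
    1 ≤ complexSpectralRadius (pathMat w n) := by
  have ht : (2 : ℝ) ≤ (pathMat w n).trace := by exact_mod_cast two_le_trace_pathMat hw n
  linarith [(complexSpectralRadius_pathMat_mem_Icc hw n).1]

lemma complexSpectralRadius_pathMat_le_two_pow (hw : ∀ n, w n = Lm ∨ w n = Rm) (n : ℕ) :
    complexSpectralRadius (pathMat w n) ≤ 2 ^ (n + 1) := by
  have htS : ((pathMat w n).trace : ℝ) ≤ entrySum (pathMat w n) := by
    exact_mod_cast trace_le_entrySum (pathMat_nonneg hw n)
  have hS : (entrySum (pathMat w n) : ℝ) ≤ 2 ^ (n + 1) := by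
    exact_mod_cast entrySum_pathMat_le_two_pow hw n
  linarith [(complexSpectralRadius_pathMat_mem_Icc hw n).2]

lemma Qnorm_pos (hdef : h ^ 2 - 4 * a * b < 0) (hw : ∀ n, w n = Lm ∨ w n = Rm) (n : ℕ) :
    0 < Qnorm a h b w n := by
  have hS := two_le_entrySum_pathMat hw n
  have := neg_disc_mul_entrySum_sq_le_Qnorm a h b (w := w) (n := n)
  nlinarith [abs_nonneg a, abs_nonneg b]

lemma Qnorm_le_mul_complexSpectralRadius_sq (hw : ∀ n, w n = Lm ∨ w n = Rm) (n : ℕ) :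
    (Qnorm a h b w n : ℝ) ≤
      32 * (|a| + |h| + |b| : ℤ) * (n + 1) ^ 2 * complexSpectralRadius (pathMat w n) ^ 2 := by
  set ρ := complexSpectralRadius (pathMat w n)
  have hQ : (Qnorm a h b w n : ℝ) ≤ (|a| + |h| + |b| : ℤ) * (entrySum (pathMat w n) : ℝ) ^ 2 := by
    exact_mod_cast Qnorm_le_mul_entrySum_sq a h b (pathMat_nonneg hw n)
  have hS : (entrySum (pathMat w n) : ℝ) ≤ (n + 1) * (pathMat w n).trace := by
    exact_mod_cast entrySum_pathMat_le_mul_trace hw n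
  have hS0 : (0 : ℝ) ≤ entrySum (pathMat w n) := by
    exact_mod_cast (zero_le_two.trans (two_le_entrySum_pathMat hw n))
  have ht := (complexSpectralRadius_pathMat_mem_Icc hw n).1
  have hK : (0 : ℝ) ≤ (|a| + |h| + |b| : ℤ) := by positivity
  calc (Qnorm a h b w n : ℝ) ≤ (|a| + |h| + |b| : ℤ) * (entrySum (pathMat w n) : ℝ) ^ 2 := hQ
    _ ≤ (|a| + |h| + |b| : ℤ) * ((n + 1) * (2 * ρ)) ^ 2 := by
        gcongr
        exact hS.trans (by gcongr; linarith)
    _ ≤ 32 * (|a| + |h| + |b| : ℤ) * (n + 1) ^ 2 * ρ ^ 2 := by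
        nlinarith [sq_nonneg ((n + 1 : ℝ) * ρ)]

lemma complexSpectralRadius_sq_le_mul_Qnorm (hdef : h ^ 2 - 4 * a * b < 0)
    (hw : ∀ n, w n = Lm ∨ w n = Rm) (n : ℕ) :
    complexSpectralRadius (pathMat w n) ^ 2 ≤
      32 * (|a| + |h| + |b| : ℤ) * (n + 1) ^ 2 * (Qnorm a h b w n : ℝ) := by
  have hS : complexSpectralRadius (pathMat w n) ≤ entrySum (pathMat w n) := by
    have htS : ((pathMat w n).trace : ℝ) ≤ entrySum (pathMat w n) := by
      exact_mod_cast trace_le_entrySum (pathMat_nonneg hw n)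
    linarith [(complexSpectralRadius_pathMat_mem_Icc hw n).2]
  have hSQ : (entrySum (pathMat w n) : ℝ) ^ 2 ≤ 32 * (|a| + |b| : ℤ) * (Qnorm a h b w n : ℝ) := by
    have hD : 1 ≤ 4 * a * b - h ^ 2 := by omega
    have hS0 : 0 ≤ entrySum (pathMat w n) ^ 2 := sq_nonneg _
    exact_mod_cast (le_mul_of_one_le_left hS0 hD).trans
      (neg_disc_mul_entrySum_sq_le_Qnorm a h b (w := w) (n := n))
  have hρ0 := one_le_complexSpectralRadius_pathMat hw n
  have hQ0 : (0 : ℝ) ≤ Qnorm a h b w n := by exact_mod_cast (Qnorm_pos hdef hw n).le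
  have hab : ((|a| + |b| : ℤ) : ℝ) ≤ (|a| + |h| + |b| : ℤ) := by
    exact_mod_cast (by linarith [abs_nonneg h] : |a| + |b| ≤ |a| + |h| + |b|)
  have hn : (1 : ℝ) ≤ (n + 1) ^ 2 := one_le_pow₀ (by linarith [n.cast_nonneg (α := ℝ)])
  calc complexSpectralRadius (pathMat w n) ^ 2 ≤ (entrySum (pathMat w n) : ℝ) ^ 2 := by
        gcongr
    _ ≤ 32 * (|a| + |b| : ℤ) * (Qnorm a h b w n : ℝ) := hSQ
    _ ≤ 32 * (|a| + |h| + |b| : ℤ) * (n + 1) ^ 2 * (Qnorm a h b w n : ℝ) := by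
        have : (0:ℝ) ≤ ((|a| + |b| : ℤ) : ℝ) := by positivity
        nlinarith [mul_le_mul_of_nonneg_right hab hQ0]

end Comparison

/-- For a definite integer binary quadratic form `Q = a x² + h x y + b y²`
(discriminant `D = h² - 4ab < 0`) and every path `w` in {L,R}^ℕ, one has `Λ_Q(w) = 2 Λ(w)`. -/
theorem lyapunov_definite_form (a h b : ℤ) (hdef : h ^ 2 - 4 * a * b < 0)
    (w : ℕ → Matrix (Fin 2) (Fin 2) ℤ) (hw : ∀ n, w n = Lm ∨ w n = Rm) :
    LyapQ a h b w = 2 * Lyap w := by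
  have hρ_one := one_le_complexSpectralRadius_pathMat hw
  have hρ_pow := complexSpectralRadius_pathMat_le_two_pow hw
  have hcompare := limsup_log_div_eq_of_le_mul_pow (c := 2 ^ 2)
    (u := fun n => (Qnorm a h b w n : ℝ)) (v := fun n => complexSpectralRadius (pathMat w n) ^ 2)
    (fun n => by exact_mod_cast Qnorm_pos hdef hw n) (fun n => one_le_pow₀ (hρ_one n))
    (fun n => (pow_le_pow_left₀ (by linarith [hρ_one n]) (hρ_pow n) 2).trans_eq
      (by rw [← pow_mul, ← pow_mul, mul_comm]))
    (Qnorm_le_mul_complexSpectralRadius_sq hw) (complexSpectralRadius_sq_le_mul_Qnorm hdef hw)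
  calc LyapQ a h b w
      = limsup (fun n : ℕ => 2 * (Real.log (complexSpectralRadius (pathMat w n)) / n)) atTop := by
        rw [LyapQ, hcompare]
        simp only [Real.log_pow, Nat.cast_ofNat, mul_div_assoc]
    _ = 2 * Lyap w :=
        limsup_const_mul_of_nonneg zero_le_two (isBoundedUnder_log_div hρ_one hρ_pow)
          (isCoboundedUnder_le_of_le atTop fun n =>
            div_nonneg (Real.log_nonneg (hρ_one n)) n.cast_nonneg)

end
end

section
/- Let α = [a₀; a₁, …, a_k, \overline{b₁, …, b_l}] be the continued fraction expansion of a quadratic irrational (a₀ ∈ ℤ, aᵢ ≥ 1 for 1 ≤ i ≤ k, bⱼ ≥ 1, the block b₁,…,b_l repeating forever), with k ≥ 1 and a_k < b_l. Then the conjugate of α equals the value of the continued fraction ᾱ = [a₀, …, a_{k−2}, a_{k−1}−1, 1, b_l−a_k−1, \overline{b_{l−1}, b_{l−2}, …, b₁, b_l}] (entries equal to 0 are allowed and the value is understood as the limit of the convergents of this sequence). -/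
/-!
Conjugation commutes with the Gauss map, so the conjugates `ηₙ` of the complete quotients of `α`
satisfy `ηₙ = aₙ + 1 / ηₙ₊₁` with `η₀ = ᾱ`. In the periodic part they lie in `(-1, 0)`: once one
`ηₙ` (`n ≥ 1`) is negative all later ones are in `(-1, 0)`, and if none were negative, `η` would
be a sequence of positive complete quotients for the expansion of `α`, forcing `ᾱ = α`. Read
backwards through the period, `-1 / η` is then a sequence of positive complete quotients for the
reversed period. The only negative link left is `η_k = a_k - w` with `w = -1 / η_{k+1} > a_k + 1`,
removed by `a_{k-1} + 1 / (a_k - w) = (a_{k-1} - 1) + 1 / (1 + 1 / (w - a_k - 1))`; and positive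
complete quotients determine the value of a continued fraction.
-/

open Filter

noncomputable section

/-- Continued fraction numerators: `cfNum c (n+1) = pₙ` with `p₋₁ = 1`, `p₀ = c 0`,
`pₙ = cₙ pₙ₋₁ + pₙ₋₂`. -/
def cfNum (c : ℕ → ℤ) : ℕ → ℤ
  | 0 => 1
  | 1 => c 0
  | n + 2 => c (n + 1) * cfNum c (n + 1) + cfNum c n

/-- Continued fraction denominators: `cfDen c (n+1) = qₙ` with `q₋₁ = 0`, `q₀ = 1`,
`qₙ = cₙ qₙ₋₁ + qₙ₋₂`. -/
def cfDen (c : ℕ → ℤ) : ℕ → ℤ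
  | 0 => 0
  | 1 => 1
  | n + 2 => c (n + 1) * cfDen c (n + 1) + cfDen c n

/-- The `n`-th convergent `pₙ/qₙ` of the continued fraction with partial quotients `c`. -/
def cfConv (c : ℕ → ℤ) (n : ℕ) : ℝ := (cfNum c (n + 1) : ℝ) / (cfDen c (n + 1) : ℝ)

/-- The Gauss map iterates of `α`. -/
def cfXi (α : ℝ) : ℕ → ℝ
  | 0 => α
  | n + 1 => 1 / Int.fract (cfXi α n)

/-- The `n`-th partial quotient of `α`. -/
def cfA (α : ℝ) (n : ℕ) : ℤ := ⌊cfXi α n⌋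

open Topology Set

lemma cfNum_add_two (c : ℕ → ℤ) (n : ℕ) :
    cfNum c (n + 2) = c (n + 1) * cfNum c (n + 1) + cfNum c n := rfl

lemma cfDen_add_two (c : ℕ → ℤ) (n : ℕ) :
    cfDen c (n + 2) = c (n + 1) * cfDen c (n + 1) + cfDen c n := rfl

lemma cfNum_mul_cfDen_sub (c : ℕ → ℤ) (n : ℕ) :
    cfNum c (n + 1) * cfDen c n - cfNum c n * cfDen c (n + 1) = (-1) ^ (n + 1) := by
  induction n with
  | zero => simp [cfNum, cfDen]
  | succ n ih =>
    rw [cfNum_add_two, cfDen_add_two, pow_succ, ← ih]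
    ring

lemma mul_cfDen_tail_eq {K : Type*} [Field K] (c : ℕ → ℤ) (t : ℕ → K) (n : ℕ)
    (hrec : ∀ m ≤ n, t m = c m + 1 / t (m + 1)) (hne : ∀ m ≤ n, t (m + 1) ≠ 0) :
    t 0 * (t (n + 1) * cfDen c (n + 1) + cfDen c n)
      = t (n + 1) * cfNum c (n + 1) + cfNum c n := by
  induction n with
  | zero =>
    rw [hrec 0 le_rfl]
    field_simp [hne 0 le_rfl]
    simp only [cfNum, cfDen]
    push_cast
    ring
  | succ n ih =>
    have ih := ih (fun m hm => hrec m (by omega)) (fun m hm => hne m (by omega))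
    have key : t (n + 1) * t (n + 2) = c (n + 1) * t (n + 2) + 1 := by
      rw [hrec (n + 1) le_rfl]; field_simp [hne (n + 1) le_rfl]
    rw [cfNum_add_two, cfDen_add_two]
    push_cast
    linear_combination t (n + 2) * ih - (t 0 * (cfDen c (n + 1) : K) - cfNum c (n + 1)) * key

lemma cfDen_nonneg {c : ℕ → ℤ} (hc : ∀ i, 1 ≤ i → 0 ≤ c i) (n : ℕ) : 0 ≤ cfDen c n := by
  induction n using Nat.strong_induction_on with
  | _ n ih =>
    match n with
    | 0 => exact le_rfl
    | 1 => exact zero_le_one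
    | n + 2 =>
      rw [cfDen_add_two]
      have := ih n (by omega); have := ih (n + 1) (by omega); have := hc (n + 1) (by omega)
      positivity

lemma one_le_cfDen_add_cfDen_succ {c : ℕ → ℤ} (hc : ∀ i, 1 ≤ i → 0 ≤ c i) (n : ℕ) :
    1 ≤ cfDen c n + cfDen c (n + 1) := by
  induction n with
  | zero => simp [cfDen]
  | succ n ih =>
    rw [cfDen_add_two]
    nlinarith [hc (n + 1) (by omega), cfDen_nonneg hc (n + 1), cfDen_nonneg hc n]

lemma tendsto_cfDen_atTop {c : ℕ → ℤ} (hc : ∀ i, 1 ≤ i → 0 ≤ c i) (K : ℕ)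
    (hcK : ∀ i, K ≤ i → 1 ≤ c i) : Tendsto (fun n => (cfDen c n : ℝ)) atTop atTop := by
  have hstep : ∀ n, K ≤ n → cfDen c (n + 1) + cfDen c n ≤ cfDen c (n + 2) := fun n hn => by
    rw [cfDen_add_two]; nlinarith [hcK (n + 1) (by omega), cfDen_nonneg hc (n + 1)]
  have hone : ∀ n, K + 2 ≤ n → 1 ≤ cfDen c n := fun n hn => by
    obtain ⟨m, rfl⟩ : ∃ m, n = m + 2 := ⟨n - 2, by omega⟩
    linarith [hstep m (by omega), one_le_cfDen_add_cfDen_succ hc m]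
  have hgrow : ∀ j : ℕ, (j : ℤ) + 1 ≤ cfDen c (j + (K + 3)) := fun j => by
    induction j with
    | zero => simpa using hone (K + 3) (by omega)
    | succ j ih =>
      have := hstep (j + (K + 2)) (by omega)
      have := hone (j + (K + 2)) (by omega)
      rw [show j + 1 + (K + 3) = j + (K + 2) + 2 by omega]
      rw [show j + (K + 3) = j + (K + 2) + 1 by omega] at ih
      push_cast
      linarith
  exact (tendsto_add_atTop_iff_nat (K + 3)).mp <|
    tendsto_atTop_mono (fun j => by exact_mod_cast hgrow j) <|
      tendsto_atTop_add_const_right _ 1 tendsto_natCast_atTop_atTop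

lemma tendsto_cfConv_of_tails {c : ℕ → ℤ} {t : ℕ → ℝ} (K : ℕ)
    (hrec : ∀ m, t m = c m + 1 / t (m + 1)) (hpos : ∀ m, 0 < t (m + 1))
    (hc : ∀ i, 1 ≤ i → 0 ≤ c i) (hcK : ∀ i, K ≤ i → 1 ≤ c i) :
    Tendsto (cfConv c) atTop (𝓝 (t 0)) := by
  have hq := tendsto_cfDen_atTop hc K hcK
  have hbound : ∀ᶠ n in atTop, |cfConv c n - t 0| ≤ 1 / (cfDen c (n + 1) : ℝ) := by
    filter_upwards [hq.eventually_ge_atTop 1, (tendsto_add_atTop_iff_nat 1).mpr hq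
      |>.eventually_ge_atTop 1] with n hn hn1
    set q₀ : ℝ := ((cfDen c n : ℤ) : ℝ)
    set q₁ : ℝ := ((cfDen c (n + 1) : ℤ) : ℝ)
    have hD : 0 < t (n + 1) * q₁ + q₀ := by nlinarith [hpos n]
    have ht0 : t 0 = (t (n + 1) * cfNum c (n + 1) + cfNum c n) / (t (n + 1) * q₁ + q₀) := by
      rw [eq_div_iff hD.ne', ← mul_cfDen_tail_eq c t n (fun m _ => hrec m)
        (fun m _ => (hpos m).ne')]
    have hdet : (cfNum c (n + 1) : ℝ) * q₀ - cfNum c n * q₁ = (-1) ^ (n + 1) := by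
      have h := congrArg (Int.cast : ℤ → ℝ) (cfNum_mul_cfDen_sub c n)
      push_cast at h
      exact h
    have hdiff : cfConv c n - t 0 = (-1) ^ (n + 1) / (q₁ * (t (n + 1) * q₁ + q₀)) := by
      rw [cfConv, ht0, div_sub_div _ _ (by positivity) hD.ne', ← hdet]
      ring
    rw [hdiff, abs_div, abs_pow, abs_neg, abs_one, one_pow, abs_of_pos (by positivity)]
    gcongr
    exact le_mul_of_one_le_right (by linarith) (by nlinarith [hpos n])
  exact tendsto_sub_nhds_zero_iff.mp <| squeeze_zero_norm' hbound <|
    tendsto_const_nhds.div_atTop ((tendsto_add_atTop_iff_nat 1).mpr hq)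

lemma cfXi_succ (α : ℝ) (n : ℕ) : cfXi α (n + 1) = 1 / Int.fract (cfXi α n) := rfl

lemma Irrational.cfXi {α : ℝ} (h : Irrational α) (n : ℕ) : Irrational (cfXi α n) := by
  induction n with
  | zero => exact h
  | succ n ih => rw [cfXi_succ, one_div]; exact (ih.sub_intCast _).inv

lemma one_lt_cfXi_succ {α : ℝ} (h : Irrational α) (n : ℕ) : 1 < cfXi α (n + 1) := by
  have hpos : 0 < Int.fract (cfXi α n) := Int.fract_pos.mpr ((h.cfXi n).ne_int _)
  rw [cfXi_succ, lt_one_div one_pos hpos, div_one]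
  exact Int.fract_lt_one _

lemma one_le_cfA {α : ℝ} (h : Irrational α) {n : ℕ} (hn : 1 ≤ n) : 1 ≤ cfA α n := by
  obtain ⟨m, rfl⟩ : ∃ m, n = m + 1 := ⟨n - 1, by omega⟩
  exact Int.le_floor.mpr (by exact_mod_cast (one_lt_cfXi_succ h m).le)

lemma cfXi_eq_cfA_add (α : ℝ) (n : ℕ) : cfXi α n = cfA α n + 1 / cfXi α (n + 1) := by
  rw [cfXi_succ, one_div_one_div, cfA, Int.floor_add_fract]

lemma cfXi_cfXi (α : ℝ) (m n : ℕ) : cfXi (cfXi α m) n = cfXi α (m + n) := by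
  induction n with
  | zero => rfl
  | succ n ih => rw [cfXi_succ, ih, ← cfXi_succ]; rfl

lemma tendsto_cfConv_cfA {α : ℝ} (h : Irrational α) :
    Tendsto (cfConv (cfA α)) atTop (𝓝 α) :=
  tendsto_cfConv_of_tails 1 (cfXi_eq_cfA_add α) (fun m => one_pos.trans (one_lt_cfXi_succ h m))
    (fun _ hi => zero_le_one.trans (one_le_cfA h hi)) (fun _ hi => one_le_cfA h hi)

lemma Irrational.eq_of_cfA_eq {x y : ℝ} (hx : Irrational x) (hy : Irrational y)
    (h : cfA x = cfA y) : x = y :=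
  tendsto_nhds_unique (h ▸ tendsto_cfConv_cfA hx) (tendsto_cfConv_cfA hy)

lemma periodic_cfXi {α : ℝ} (hα : Irrational α) {m l : ℕ}
    (h : Function.Periodic (fun n => cfA α (m + n)) l) :
    Function.Periodic (fun n => cfXi α (m + n)) l := fun n => by
  refine (hα.cfXi _).eq_of_cfA_eq (hα.cfXi _) (funext fun j => ?_)
  have := h (n + j)
  simp only [cfA, cfXi_cfXi, ← add_assoc] at this ⊢
  rwa [add_right_comm]

lemma Irrational.eq_zero_of_intCast_mul_add_eq_zero {x : ℝ} (hx : Irrational x) {m n : ℤ}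
    (h : (m : ℝ) * x + n = 0) : m = 0 ∧ n = 0 := by
  by_cases hm : m = 0
  · subst hm
    simp only [Int.cast_zero, zero_mul, zero_add, Int.cast_eq_zero] at h
    exact ⟨rfl, h⟩
  · exact absurd h ((hx.intCast_mul hm).add_intCast n).ne_zero

def IsQuadConj (x x' : ℝ) : Prop :=
  x' ≠ x ∧ ∃ A B C : ℤ, A ≠ 0 ∧ A * x ^ 2 + B * x + C = 0 ∧ A * x' ^ 2 + B * x' + C = 0

namespace IsQuadConj

variable {x x' : ℝ}

lemma exists_mul_add_add_eq_zero (h : IsQuadConj x x') :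
    ∃ A B C : ℤ, A ≠ 0 ∧ A * x ^ 2 + B * x + C = 0 ∧ A * (x + x') + B = 0 := by
  obtain ⟨hne, A, B, C, hA, hx, hx'⟩ := h
  refine ⟨A, B, C, hA, hx, mul_left_cancel₀ (sub_ne_zero.mpr hne) ?_⟩
  linear_combination hx' - hx

lemma irrational (hx : Irrational x) (h : IsQuadConj x x') : Irrational x' := by
  obtain ⟨A, B, -, hA, -, hsum⟩ := h.exists_mul_add_add_eq_zero
  refine Irrational.of_intCast_mul A ?_
  convert ((hx.intCast_mul hA).add_intCast B).neg using 1
  linear_combination hsum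

lemma unique (hx : Irrational x) {y z : ℝ} (hy : IsQuadConj x y) (hz : IsQuadConj x z) :
    y = z := by
  obtain ⟨A, B, C, hA, hx₁, hy⟩ := hy.exists_mul_add_add_eq_zero
  obtain ⟨A', B', C', hA', hx₂, hz⟩ := hz.exists_mul_add_add_eq_zero
  have hlin : ((A' * B - A * B' : ℤ) : ℝ) * x + (A' * C - A * C' : ℤ) = 0 := by
    push_cast
    linear_combination (A' : ℝ) * hx₁ - A * hx₂
  have hB := (hx.eq_zero_of_intCast_mul_add_eq_zero hlin).1
  have hAA' : (A * A' : ℝ) ≠ 0 := by exact_mod_cast mul_ne_zero hA hA'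
  refine sub_eq_zero.mp (mul_left_cancel₀ hAA' ?_)
  have hB : (A' * B - A * B' : ℝ) = 0 := by exact_mod_cast hB
  linear_combination A' * hy - A * hz - hB

lemma sub_intCast (h : IsQuadConj x x') (a : ℤ) : IsQuadConj (x - a) (x' - a) := by
  obtain ⟨hne, A, B, C, hA, hx, hx'⟩ := h
  refine ⟨by simpa using hne, A, 2 * A * a + B, A * a ^ 2 + B * a + C, hA, ?_, ?_⟩ <;> push_cast
  · linear_combination hx
  · linear_combination hx'

lemma inv (hx : Irrational x) (h : IsQuadConj x x') : IsQuadConj x⁻¹ x'⁻¹ := by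
  have hx0 := hx.ne_zero
  have hx'0 := (h.irrational hx).ne_zero
  obtain ⟨hne, A, B, C, hA, hxr, hx'r⟩ := h
  have hC : C ≠ 0 := by
    rintro rfl
    refine hA (hx.eq_zero_of_intCast_mul_add_eq_zero (n := B) (mul_left_cancel₀ hx0 ?_)).1
    linear_combination hxr
  refine ⟨inv_inj.not.mpr hne, C, B, A, hC, ?_, ?_⟩
  · field_simp; linear_combination hxr
  · field_simp; linear_combination hx'r

end IsQuadConj

def cfXiConj (α α' : ℝ) : ℕ → ℝ
  | 0 => α'
  | n + 1 => 1 / (cfXiConj α α' n - cfA α n)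

section cfXiConj

variable {α α' : ℝ}

lemma cfXiConj_eq_cfA_add (α α' : ℝ) (n : ℕ) :
    cfXiConj α α' n = cfA α n + 1 / cfXiConj α α' (n + 1) := by
  rw [cfXiConj, one_div_one_div]; ring

lemma isQuadConj_cfXiConj (hα : Irrational α) (h : IsQuadConj α α') (n : ℕ) :
    IsQuadConj (cfXi α n) (cfXiConj α α' n) := by
  induction n with
  | zero => exact h
  | succ n ih =>
    simpa [cfXi_succ, cfXiConj, cfA, ← Int.self_sub_floor, one_div] using
      (ih.sub_intCast ⌊cfXi α n⌋).inv ((hα.cfXi n).sub_intCast _)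

lemma periodic_cfXiConj (hα : Irrational α) (h : IsQuadConj α α') {m l : ℕ}
    (hper : Function.Periodic (fun n => cfA α (m + n)) l) :
    Function.Periodic (fun n => cfXiConj α α' (m + n)) l := fun n => by
  have h₁ := isQuadConj_cfXiConj hα h (m + (n + l))
  rw [show cfXi α (m + (n + l)) = cfXi α (m + n) from periodic_cfXi hα hper n] at h₁
  exact h₁.unique (hα.cfXi _) (isQuadConj_cfXiConj hα h (m + n))

lemma cfXiConj_succ_mem_Ioo (hα : Irrational α) {n : ℕ} (hn : 1 ≤ n) (hneg : cfXiConj α α' n < 0) :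
    cfXiConj α α' (n + 1) ∈ Ioo (-1) 0 := by
  have hlt : cfXiConj α α' n - cfA α n < -1 := by
    have : (1 : ℝ) ≤ cfA α n := by exact_mod_cast one_le_cfA hα hn
    linarith
  rw [cfXiConj]
  exact ⟨by rw [lt_div_iff_of_neg (by linarith)]; linarith, one_div_neg.mpr (by linarith)⟩

lemma exists_cfXiConj_neg (hα : Irrational α) (h : IsQuadConj α α') :
    ∃ n, 1 ≤ n ∧ cfXiConj α α' n < 0 := by
  by_contra! hnonneg
  have hpos : ∀ m, 0 < cfXiConj α α' (m + 1) := fun m =>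
    (hnonneg (m + 1) (by omega)).lt_of_ne'
      ((isQuadConj_cfXiConj hα h (m + 1)).irrational (hα.cfXi _)).ne_zero
  exact h.1 (tendsto_nhds_unique (tendsto_cfConv_of_tails 1 (cfXiConj_eq_cfA_add α α') hpos
    (fun _ hi => zero_le_one.trans (one_le_cfA hα hi)) (fun _ hi => one_le_cfA hα hi))
    (tendsto_cfConv_cfA hα))

lemma cfXiConj_mem_Ioo (hα : Irrational α) (h : IsQuadConj α α') {m l : ℕ} (hl : 0 < l)
    (hper : Function.Periodic (fun n => cfA α (m + n)) l) (n : ℕ) :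
    cfXiConj α α' (m + n) ∈ Ioo (-1) 0 := by
  obtain ⟨N, hN, hneg⟩ := exists_cfXiConj_neg hα h
  have hafter : ∀ j, cfXiConj α α' (N + 1 + j) ∈ Ioo (-1) 0 := fun j => by
    induction j with
    | zero => exact cfXiConj_succ_mem_Ioo hα hN hneg
    | succ j ih => exact cfXiConj_succ_mem_Ioo (n := N + 1 + j) hα (by omega) ih.2
  have hNl : N + 1 ≤ (N + 1) * l := Nat.le_mul_of_pos_right _ hl
  obtain ⟨j, hj⟩ : ∃ j, m + (n + (N + 1) * l) = N + 1 + j :=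
    ⟨m + n + (N + 1) * l - (N + 1), by omega⟩
  have hshift : cfXiConj α α' (m + (n + (N + 1) * l)) = cfXiConj α α' (m + n) :=
    (periodic_cfXiConj hα h hper).nat_mul (N + 1) n
  rw [← hshift, hj]
  exact hafter j

end cfXiConj

lemma pos_tail_of_eventually_pos {c : ℕ → ℤ} {t : ℕ → ℝ} (hrec : ∀ m, t m = c m + 1 / t (m + 1))
    (hc : ∀ i, 1 ≤ i → 0 ≤ c i) {N : ℕ} (hN : ∀ n, N ≤ n → 0 < t n) (n : ℕ) : 0 < t (n + 1) := by
  suffices ∀ d n, N ≤ n + 1 + d → 0 < t (n + 1) from this N n (by omega)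
  intro d
  induction d with
  | zero => exact fun n hn => hN _ hn
  | succ d ih =>
    intro n hn
    rw [hrec]
    have := ih (n + 1) (by omega)
    have : (0 : ℝ) ≤ c (n + 1) := by exact_mod_cast hc (n + 1) (by omega)
    positivity

lemma exists_tails_reversed_period {s : ℕ → ℝ} {d : ℕ → ℤ} {l : ℕ} (hl : 0 < l)
    (hrec : ∀ n, s n = d n + 1 / s (n + 1)) (hper : Function.Periodic s l)
    (hs : ∀ n, s n ∈ Ioo (-1) 0) :
    ∃ r : ℕ → ℝ, r 0 = -1 / s 0 ∧ (∀ j, 1 < r j) ∧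
      ∀ j, r j = d ((l - 1) * (j + 1)) + 1 / r (j + 1) := by
  -- `(l - 1) * j ≡ -j [MOD l]`, so the index `(l - 1) * j` runs backwards through the period
  refine ⟨fun j => -1 / s ((l - 1) * j), by simp, fun j => ?_, fun j => ?_⟩
  · obtain ⟨h₁, h₂⟩ := hs ((l - 1) * j)
    exact (lt_div_iff_of_neg h₂).mpr (by linarith)
  · have hidx : (l - 1) * (j + 1) + 1 = (l - 1) * j + l := by
      rw [mul_add, mul_one, add_assoc, Nat.sub_add_cancel hl]
    have h := hrec ((l - 1) * (j + 1))
    rw [hidx, hper] at h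
    simp only
    rw [one_div_div, h]
    ring

lemma mul_pred_add_two_mod {l : ℕ} (hl : 0 < l) (j : ℕ) :
    (l - 1) * (j + 2) % l = (2 * l - 2 - j % l) % l := by
  have hr := Nat.mod_lt j hl
  have hj : (j : ℤ) = l * (j / l : ℕ) + (j % l : ℕ) := by
    exact_mod_cast (Nat.div_add_mod j l).symm
  refine Nat.ModEq.symm (Nat.modEq_iff_dvd.mpr ⟨j - (j / l : ℕ), ?_⟩)
  generalize j / l = q at hj
  generalize j % l = r at hj hr ⊢
  rw [Nat.cast_mul, Nat.cast_sub hl, Nat.cast_sub (by omega), Nat.cast_sub (by omega)]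
  push_cast
  linear_combination -hj

/-- `[a₀, …, a_{k-2}, a_{k-1} - 1, 1, b_l - a_k - 1, \overline{b_{l-1}, …, b₁, b_l}]`. -/
def conjPartialQuotients (k l : ℕ) (a b : ℕ → ℤ) : ℕ → ℤ := fun i =>
  if i + 1 < k then a i
  else if i + 1 = k then a (k - 1) - 1
  else if i = k then 1
  else if i = k + 1 then b (l - 1) - a k - 1
  else b ((2 * l - 2 - (i - (k + 2)) % l) % l)

section conjPartialQuotients

variable {k l : ℕ} {a b : ℕ → ℤ}

lemma conjPartialQuotients_of_lt {i : ℕ} (hi : i + 1 < k) : conjPartialQuotients k l a b i = a i :=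
  if_pos hi

lemma conjPartialQuotients_pred (hk : 1 ≤ k) :
    conjPartialQuotients k l a b (k - 1) = a (k - 1) - 1 := by
  simp [conjPartialQuotients, Nat.sub_add_cancel hk]

lemma conjPartialQuotients_self : conjPartialQuotients k l a b k = 1 := by
  simp [conjPartialQuotients]

lemma conjPartialQuotients_succ : conjPartialQuotients k l a b (k + 1) = b (l - 1) - a k - 1 := by
  simp [conjPartialQuotients, show ¬ k + 1 + 1 < k by omega, show k + 1 + 1 ≠ k by omega]

lemma conjPartialQuotients_add_two (hl : 0 < l) (j : ℕ) :
    conjPartialQuotients k l a b (k + 2 + j) = b ((l - 1) * (j + 2) % l) := by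
  simp [conjPartialQuotients, mul_pred_add_two_mod hl, show ¬ k + 2 + j + 1 < k by omega,
    show k + 2 + j + 1 ≠ k by omega, show k + 2 + j ≠ k by omega, show k + 2 + j ≠ k + 1 by omega]

lemma one_le_conjPartialQuotients (hl : 0 < l) (hb : ∀ j, j < l → 1 ≤ b j) {i : ℕ}
    (hi : k + 2 ≤ i) : 1 ≤ conjPartialQuotients k l a b i := by
  obtain ⟨j, rfl⟩ : ∃ j, i = k + 2 + j := ⟨i - (k + 2), by omega⟩
  rw [conjPartialQuotients_add_two hl]
  exact hb _ (Nat.mod_lt _ hl)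

lemma conjPartialQuotients_nonneg (hk : 1 ≤ k) (hl : 0 < l) (ha : ∀ i, 1 ≤ i → i ≤ k → 1 ≤ a i)
    (hb : ∀ j, j < l → 1 ≤ b j) (hlt : a k < b (l - 1)) {i : ℕ} (hi : 1 ≤ i) :
    0 ≤ conjPartialQuotients k l a b i := by
  obtain hi' | rfl | rfl | rfl | ⟨j, rfl⟩ :
      i + 1 < k ∨ i = k - 1 ∨ i = k ∨ i = k + 1 ∨ ∃ j, i = k + 2 + j := by
    rcases Nat.lt_or_ge i (k + 2) with h | h
    · omega
    · exact Or.inr (Or.inr (Or.inr (Or.inr ⟨i - (k + 2), by omega⟩)))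
  · rw [conjPartialQuotients_of_lt hi']; linarith [ha i hi (by omega)]
  · rw [conjPartialQuotients_pred hk]; linarith [ha (k - 1) hi (by omega)]
  · rw [conjPartialQuotients_self]; exact zero_le_one
  · rw [conjPartialQuotients_succ]; omega
  · exact zero_le_one.trans (one_le_conjPartialQuotients hl hb (by omega))

end conjPartialQuotients

lemma sub_one_add_one_div_one_add_one_div {x : ℝ} (hx : 0 < x) (a : ℝ) :
    a - 1 + 1 / (1 + 1 / x) = a + 1 / -(x + 1) := by
  field_simp
  ring

def conjTails (k : ℕ) (η r : ℕ → ℝ) (x : ℝ) (n : ℕ) : ℝ :=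
  if n < k then η n else if n = k then 1 + 1 / x else if n = k + 1 then x else r (n - (k + 1))

section conjTails

variable {k l : ℕ} {a b : ℕ → ℤ} {η r : ℕ → ℝ} {x : ℝ}

lemma conjTails_of_lt {n : ℕ} (hn : n < k) : conjTails k η r x n = η n := if_pos hn

lemma conjTails_self : conjTails k η r x k = 1 + 1 / x := by simp [conjTails]

lemma conjTails_succ : conjTails k η r x (k + 1) = x := by simp [conjTails]

lemma conjTails_add_two (j : ℕ) : conjTails k η r x (k + 2 + j) = r (j + 1) := by
  simp only [conjTails, if_neg (show ¬ k + 2 + j < k by omega),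
    if_neg (show k + 2 + j ≠ k by omega), if_neg (show k + 2 + j ≠ k + 1 by omega),
    show k + 2 + j - (k + 1) = j + 1 by omega]

lemma conjTails_pos (hx : 0 < x) (hr : ∀ j, 0 < r j) {n : ℕ} (hn : k ≤ n) :
    0 < conjTails k η r x n := by
  obtain rfl | rfl | ⟨j, rfl⟩ : n = k ∨ n = k + 1 ∨ ∃ j, n = k + 2 + j := by
    rcases Nat.lt_or_ge n (k + 2) with h | h
    · omega
    · exact Or.inr (Or.inr ⟨n - (k + 2), by omega⟩)
  · rw [conjTails_self]; positivity
  · rwa [conjTails_succ]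
  · rw [conjTails_add_two]; exact hr _

lemma conjTails_eq_add (hk : 1 ≤ k) (hl : 0 < l) (hx : 0 < x)
    (hhead : ∀ n, n < k → η n = a n + 1 / η (n + 1)) (hηk : η k = -(x + 1))
    (hx_eq : x = b (l - 1) - a k - 1 + 1 / r 1)
    (hr : ∀ j, r j = b ((l - 1) * (j + 1) % l) + 1 / r (j + 1)) (n : ℕ) :
    conjTails k η r x n = conjPartialQuotients k l a b n + 1 / conjTails k η r x (n + 1) := by
  obtain hn | rfl | rfl | rfl | ⟨j, rfl⟩ :
      n + 1 < k ∨ n = k - 1 ∨ n = k ∨ n = k + 1 ∨ ∃ j, n = k + 2 + j := by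
    rcases Nat.lt_or_ge n (k + 2) with h | h
    · omega
    · exact Or.inr (Or.inr (Or.inr (Or.inr ⟨n - (k + 2), by omega⟩)))
  · rw [conjTails_of_lt (by omega), conjTails_of_lt hn, conjPartialQuotients_of_lt hn]
    exact hhead n (by omega)
  · rw [conjTails_of_lt (by omega), Nat.sub_add_cancel hk, conjTails_self,
      conjPartialQuotients_pred hk, hhead _ (by omega), Nat.sub_add_cancel hk, hηk]
    push_cast
    rw [sub_one_add_one_div_one_add_one_div hx]
  · rw [conjTails_self, conjTails_succ, conjPartialQuotients_self, Int.cast_one]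
  · rw [conjTails_succ, show k + 1 + 1 = k + 2 + 0 by rfl, conjTails_add_two,
      conjPartialQuotients_succ, hx_eq]
    push_cast
    ring
  · rw [conjTails_add_two, show k + 2 + j + 1 = k + 2 + (j + 1) by omega, conjTails_add_two,
      conjPartialQuotients_add_two hl]
    exact hr (j + 1)

theorem tendsto_cfConv_conjPartialQuotients (hk : 1 ≤ k) (hl : 0 < l)
    (ha : ∀ i, 1 ≤ i → i ≤ k → 1 ≤ a i) (hb : ∀ j, j < l → 1 ≤ b j) (hlt : a k < b (l - 1))
    (hrec : ∀ n, η n = (if n ≤ k then a n else b ((n - (k + 1)) % l)) + 1 / η (n + 1))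
    (hper : Function.Periodic (fun n => η (k + 1 + n)) l)
    (hred : ∀ n, η (k + 1 + n) ∈ Ioo (-1) 0) :
    Tendsto (cfConv (conjPartialQuotients k l a b)) atTop (𝓝 (η 0)) := by
  obtain ⟨r, hr₀, hr_gt, hr⟩ := exists_tails_reversed_period (s := fun n => η (k + 1 + n))
    (d := fun n => b (n % l)) hl (fun n => by
      have h := hrec (k + 1 + n)
      rwa [if_neg (by omega), show k + 1 + n - (k + 1) = n by omega] at h) hper hred
  set x : ℝ := r 0 - a k - 1 with hx_def
  have hx_eq : x = b (l - 1) - a k - 1 + 1 / r 1 := by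
    rw [hx_def, hr 0, zero_add, mul_one, Nat.mod_eq_of_lt (Nat.sub_lt hl one_pos)]
    ring
  have hx : 0 < x := by
    have : (a k : ℝ) + 1 ≤ b (l - 1) := by exact_mod_cast hlt
    have : 0 < 1 / r 1 := one_div_pos.mpr (one_pos.trans (hr_gt 1))
    linarith
  -- `η k = a k - r 0` is negative: the new expansion replaces it by `1 + 1 / x` and `x`
  have hηk : η k = -(x + 1) := by
    rw [hrec k, if_pos le_rfl, show 1 / η (k + 1) = -r 0 by simp [hr₀, neg_div]]
    ring
  have htrec := conjTails_eq_add (a := a) (b := b) hk hl hx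
    (fun n hn => by rw [hrec n, if_pos hn.le]) hηk hx_eq hr
  have hc := fun i => conjPartialQuotients_nonneg (i := i) hk hl ha hb hlt
  rw [← conjTails_of_lt (η := η) (r := r) (x := x) (by omega : 0 < k)]
  exact tendsto_cfConv_of_tails (k + 2) htrec (pos_tail_of_eventually_pos htrec hc
    fun n => conjTails_pos hx fun j => one_pos.trans (hr_gt j)) hc
    (fun i => one_le_conjPartialQuotients hl hb)

end conjTails

/-- Here `b j` denotes `b_{j+1}` for `0 ≤ j < l`. -/
theorem conjugate_cf_case_lt (k l : ℕ) (a b : ℕ → ℤ) (hk : 1 ≤ k) (hl : 1 ≤ l)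
    (ha : ∀ i, 1 ≤ i → i ≤ k → 1 ≤ a i) (hb : ∀ j, j < l → 1 ≤ b j)
    (hlt : a k < b (l - 1))
    (α α' : ℝ) (qa qh qb : ℤ) (hqa : qa ≠ 0) (hirr : Irrational α)
    (hroot : (qa : ℝ) * α ^ 2 + (qh : ℝ) * α + (qb : ℝ) = 0)
    (hroot' : (qa : ℝ) * α' ^ 2 + (qh : ℝ) * α' + (qb : ℝ) = 0)
    (hne : α' ≠ α)
    (hexp : ∀ n, cfA α n = if n ≤ k then a n else b ((n - (k + 1)) % l)) :
    Tendsto (cfConv (fun i =>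
      if i + 1 < k then a i
      else if i + 1 = k then a (k - 1) - 1
      else if i = k then 1
      else if i = k + 1 then b (l - 1) - a k - 1
      else b ((2 * l - 2 - (i - (k + 2)) % l) % l))) atTop (nhds α') := by
  have hconj : IsQuadConj α α' := ⟨hne, qa, qh, qb, hqa, hroot, hroot'⟩
  have hper : Function.Periodic (fun n => cfA α (k + 1 + n)) l := fun n => by
    simp only [hexp, if_neg (show ¬ k + 1 + (n + l) ≤ k by omega),
      if_neg (show ¬ k + 1 + n ≤ k by omega), show k + 1 + (n + l) - (k + 1) = n + l by omega,
      show k + 1 + n - (k + 1) = n by omega, Nat.add_mod_right]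
  exact tendsto_cfConv_conjPartialQuotients hk hl ha hb hlt
    (fun n => by rw [← hexp]; exact cfXiConj_eq_cfA_add α α' n)
    (periodic_cfXiConj hirr hconj hper) (cfXiConj_mem_Ioo hirr hconj hl hper)

end
end
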